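/- Let X₁, X₂, … be i.i.d. real random variables with CDF F and E|X₁| < ∞, and fix a positive integer m and p ∈ [1, ∞). Then the p-Wasserstein distance between 𝔽_{n,m} and F_m satisfies W_p^p(𝔽_{n,m}, F_m) = (1/m) ∑_{j=1}^m |μ̂_{j:m} − μ_{j:m}(F)|^p, and W_p(𝔽_{n,m}, F_m) → 0 almost surely as n → ∞. -/

import Mathlib

/-!
On `((j-1)/m, j/m]` the quantile function of `H_m(G)` is the constant `μ_{j:m}(G)`, provided
`j ↦ μ_{j:m}(G)` is nondecreasing; this holds because `β_{j+1} - β_j` integrates to zero and changes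
sign once, from negative to positive. So the `p`-th power of the Wasserstein distance is the
average of the step values.

For the limit, the strong law gives, almost surely, convergence of the empirical CDF at every
rational and of the empirical mean of `|X|`. Then the empirical quantile functions converge at
every continuity point of `F⁻¹`, hence almost everywhere, and Scheffé's lemma upgrades this to
`∫ |𝔽_n⁻¹ - F⁻¹| → 0`. Since the Beta densities are bounded, each `μ̂_{j:m} - μ_{j:m}(F)` is
controlled by that integral.
-/

open MeasureTheory Filter Set
open scoped BoundedContinuousFunction ProbabilityTheory

noncomputable section

/-- Density of the Beta(j, m-j+1) distribution. -/
def betaDens (m j : ℕ) (u : ℝ) : ℝ :=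
  (m : ℝ) * ((m - 1).choose (j - 1) : ℝ) * u ^ (j - 1) * (1 - u) ^ (m - j)

/-- Quantile function (left-continuous generalized inverse). -/
def quantile (G : ℝ → ℝ) (p : ℝ) : ℝ :=
  sInf {x : ℝ | p ≤ G x}

/-- `G` is a cumulative distribution function on ℝ. -/
structure IsCDF (G : ℝ → ℝ) : Prop where
  mono : Monotone G
  rightCont : ∀ x, ContinuousWithinAt G (Ici x) x
  tendsto_atBot : Tendsto G atBot (nhds 0)
  tendsto_atTop : Tendsto G atTop (nhds 1)

/-- `G` has finite mean: its quantile function is integrable on (0,1). -/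
def HasFiniteMean (G : ℝ → ℝ) : Prop :=
  IntegrableOn (fun u => quantile G u) (Ioo (0:ℝ) 1)

/-- Expected j-th order statistic from a sample of size m drawn from G. -/
def muOS (m j : ℕ) (G : ℝ → ℝ) : ℝ :=
  ∫ u in Ioo (0:ℝ) 1, quantile G u * betaDens m j u

/-- The Hoeffding CDF operator `H_m`. -/
def hoeffCDF (m : ℕ) (G : ℝ → ℝ) (x : ℝ) : ℝ :=
  (m : ℝ)⁻¹ * ∑ j ∈ Finset.Icc 1 m, if muOS m j G ≤ x then (1:ℝ) else 0

/-- The quantile-Hoeffding operator `I_m`. -/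
def quantHoeff (m : ℕ) (h : ℝ → ℝ) (u : ℝ) : ℝ :=
  ∑ j ∈ Finset.Icc 1 m,
    (∫ t in Ioo (0:ℝ) 1, h t * betaDens m j t) *
      (if u ∈ Ioc (((j : ℝ) - 1) / m) ((j : ℝ) / m) then (1:ℝ) else 0)

/-- Empirical CDF of the reals `x 0, ..., x (n-1)`. -/
def ecdf (n : ℕ) (x : ℕ → ℝ) (t : ℝ) : ℝ :=
  (n : ℝ)⁻¹ * ∑ i ∈ Finset.range n, if x i ≤ t then (1:ℝ) else 0

/-- Empirical CDF of the random sample `X 0, ..., X (n-1)`. -/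
def empCDF {Ω : Type*} (X : ℕ → Ω → ℝ) (n : ℕ) (ω : Ω) : ℝ → ℝ :=
  fun t => (n : ℝ)⁻¹ * ∑ i ∈ Finset.range n, if X i ω ≤ t then (1:ℝ) else 0

open ProbabilityTheory
open scoped ENNReal Topology Finset Interval

namespace IsCDF

variable {G : ℝ → ℝ}

lemma bddBelow_setOf_le (hG : IsCDF G) {p : ℝ} (hp : 0 < p) : BddBelow {x | p ≤ G x} := by
  obtain ⟨b, hb⟩ := eventually_atBot.1 (hG.tendsto_atBot.eventually_lt_const hp)
  exact ⟨b, fun x hx => not_lt.1 fun hxb => (hb x hxb.le).not_ge hx⟩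

lemma nonempty_setOf_le (hG : IsCDF G) {p : ℝ} (hp : p < 1) : {x | p ≤ G x}.Nonempty :=
  let ⟨b, hb⟩ := (hG.tendsto_atTop.eventually_const_lt hp).exists
  ⟨b, hb.le⟩

lemma quantile_le_iff (hG : IsCDF G) {p x : ℝ} (hp : p ∈ Ioo (0:ℝ) 1) :
    quantile G p ≤ x ↔ p ≤ G x := by
  refine ⟨fun h => ?_, fun h => csInf_le (hG.bddBelow_setOf_le hp.1) h⟩
  have hright : ∀ y, x < y → p ≤ G y := fun y hy =>
    let ⟨z, hz, hzy⟩ := exists_lt_of_csInf_lt (hG.nonempty_setOf_le hp.2) (h.trans_lt hy)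
    hz.trans (hG.mono hzy.le)
  exact ge_of_tendsto ((hG.rightCont x).mono Ioi_subset_Ici_self)
    (eventually_nhdsWithin_of_forall hright)

lemma lt_quantile_iff (hG : IsCDF G) {p x : ℝ} (hp : p ∈ Ioo (0:ℝ) 1) :
    x < quantile G p ↔ G x < p := by
  simpa only [not_le] using (hG.quantile_le_iff hp).not

lemma le_apply_quantile (hG : IsCDF G) {p : ℝ} (hp : p ∈ Ioo (0:ℝ) 1) :
    p ≤ G (quantile G p) :=
  (hG.quantile_le_iff hp).1 le_rfl

lemma monotoneOn_quantile (hG : IsCDF G) : MonotoneOn (quantile G) (Ioo (0:ℝ) 1) :=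
  fun _ ha _ hb hab => (hG.quantile_le_iff ha).2 (hab.trans (hG.le_apply_quantile hb))

lemma ae_continuousAt_quantile (hG : IsCDF G) :
    ∀ᵐ u ∂(volume.restrict (Ioo (0:ℝ) 1)), ContinuousAt (quantile G) u := by
  rw [ae_restrict_iff' measurableSet_Ioo]
  filter_upwards [measure_eq_zero_iff_ae_notMem.1
    (hG.monotoneOn_quantile.countable_not_continuousWithinAt.measure_zero volume)] with u hu hu01
  by_contra hdisc
  exact hu ⟨hu01, fun hcont => hdisc (hcont.continuousAt (Ioo_mem_nhds hu01.1 hu01.2))⟩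

end IsCDF

lemma isCDF_cdf (μ : Measure ℝ) : IsCDF (cdf μ) :=
  ⟨monotone_cdf μ, (cdf μ).right_continuous, tendsto_cdf_atBot μ, tendsto_cdf_atTop μ⟩

instance : IsProbabilityMeasure (volume.restrict (Ioo (0:ℝ) 1)) :=
  ⟨by simp [Real.volume_Ioo]⟩

lemma aemeasurable_quantile {G : ℝ → ℝ} (hG : IsCDF G) :
    AEMeasurable (quantile G) (volume.restrict (Ioo (0:ℝ) 1)) :=
  aemeasurable_restrict_of_monotoneOn measurableSet_Ioo hG.monotoneOn_quantile

lemma volume_Iic_inter_Ioo_zero_one {c : ℝ} (hc : c ∈ Icc (0:ℝ) 1) :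
    volume (Iic c ∩ Ioo 0 1) = ENNReal.ofReal c := by
  refine le_antisymm ?_ ?_
  · calc volume (Iic c ∩ Ioo 0 1) ≤ volume (Ioc 0 c) := measure_mono fun u hu => ⟨hu.2.1, hu.1⟩
      _ = ENNReal.ofReal c := by rw [Real.volume_Ioc, sub_zero]
  · calc ENNReal.ofReal c = volume (Ioo 0 c) := by rw [Real.volume_Ioo, sub_zero]
      _ ≤ volume (Iic c ∩ Ioo 0 1) :=
        measure_mono fun u hu => ⟨hu.2.le, hu.1, hu.2.trans_le hc.2⟩

lemma map_quantile_cdf (μ : Measure ℝ) [IsProbabilityMeasure μ] :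
    (volume.restrict (Ioo (0:ℝ) 1)).map (quantile (cdf μ)) = μ := by
  have hq := aemeasurable_quantile (isCDF_cdf μ)
  have := Measure.isProbabilityMeasure_map (μ := volume.restrict (Ioo (0:ℝ) 1)) hq
  refine Measure.ext_of_Iic _ _ fun x => ?_
  have hpre : quantile (cdf μ) ⁻¹' Iic x ∩ Ioo 0 1 = Iic (cdf μ x) ∩ Ioo 0 1 := by
    ext u
    simp only [mem_inter_iff, mem_preimage, mem_Iic, and_congr_left_iff]
    exact (isCDF_cdf μ).quantile_le_iff
  rw [Measure.map_apply_of_aemeasurable hq measurableSet_Iic,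
    Measure.restrict_apply' measurableSet_Ioo, hpre,
    volume_Iic_inter_Ioo_zero_one ⟨cdf_nonneg μ x, cdf_le_one μ x⟩, ofReal_cdf]

lemma cdf_map_apply {Ω : Type*} [MeasurableSpace Ω] {μ : Measure Ω} [IsProbabilityMeasure μ]
    {Y : Ω → ℝ} (hY : Measurable Y) (t : ℝ) : cdf (μ.map Y) t = (μ {ω | Y ω ≤ t}).toReal := by
  have := Measure.isProbabilityMeasure_map (μ := μ) hY.aemeasurable
  rw [cdf_eq_real, measureReal_def, Measure.map_apply hY measurableSet_Iic]
  rfl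

lemma hasFiniteMean_cdf_iff (μ : Measure ℝ) [IsProbabilityMeasure μ] :
    HasFiniteMean (cdf μ) ↔ Integrable id μ := by
  conv_rhs => rw [← map_quantile_cdf μ]
  exact (integrable_map_measure aestronglyMeasurable_id (aemeasurable_quantile (isCDF_cdf μ))).symm

lemma setIntegral_comp_quantile_cdf (μ : Measure ℝ) [IsProbabilityMeasure μ] {φ : ℝ → ℝ}
    (hφ : Continuous φ) :
    ∫ u in Ioo (0:ℝ) 1, φ (quantile (cdf μ) u) = ∫ x, φ x ∂μ := by
  conv_rhs => rw [← map_quantile_cdf μ]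
  exact (integral_map (aemeasurable_quantile (isCDF_cdf μ)) hφ.aestronglyMeasurable).symm

def empMeasure (n : ℕ) (x : ℕ → ℝ) : Measure ℝ :=
  (n : ℝ≥0∞)⁻¹ • ∑ i ∈ Finset.range n, Measure.dirac (x i)

section empMeasure

variable {n : ℕ} {x : ℕ → ℝ}

lemma empMeasure_apply (s : Set ℝ) :
    empMeasure n x s = (n : ℝ≥0∞)⁻¹ * ∑ i ∈ Finset.range n, s.indicator 1 (x i) := by
  simp only [empMeasure, Measure.smul_apply, Measure.coe_finsetSum, Finset.sum_apply,
    Measure.dirac_apply, smul_eq_mul]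

lemma isProbabilityMeasure_empMeasure (hn : 0 < n) : IsProbabilityMeasure (empMeasure n x) := by
  constructor
  simp only [empMeasure_apply, indicator_univ, Pi.one_apply, Finset.sum_const, Finset.card_range,
    nsmul_eq_mul, mul_one]
  exact ENNReal.inv_mul_cancel (by exact_mod_cast hn.ne') (ENNReal.natCast_ne_top n)

lemma cdf_empMeasure (hn : 0 < n) : cdf (empMeasure n x) = ecdf n x := by
  have := isProbabilityMeasure_empMeasure (x := x) hn
  ext t
  rw [cdf_eq_real, measureReal_def, empMeasure_apply, ENNReal.toReal_mul,
    ENNReal.toReal_sum fun i _ => by simp only [indicator_apply]; split_ifs <;> simp]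
  simp only [ecdf, ENNReal.toReal_inv, ENNReal.toReal_natCast, indicator_apply, mem_Iic,
    Pi.one_apply]
  congr 1
  refine Finset.sum_congr rfl fun i _ => ?_
  split_ifs <;> simp

lemma integral_empMeasure (f : ℝ → ℝ) :
    ∫ y, f y ∂(empMeasure n x) = (n : ℝ)⁻¹ * ∑ i ∈ Finset.range n, f (x i) := by
  rw [empMeasure, integral_smul_measure,
    integral_finsetSum_measure fun i _ => integrable_dirac enorm_lt_top]
  simp only [integral_dirac, smul_eq_mul, ENNReal.toReal_inv, ENNReal.toReal_natCast]

lemma integrable_empMeasure (hn : 0 < n) (f : ℝ → ℝ) : Integrable f (empMeasure n x) :=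
  (integrable_finsetSum_measure.2 fun i _ => integrable_dirac enorm_lt_top).smul_measure
    (ENNReal.inv_ne_top.2 (by exact_mod_cast hn.ne'))

end empMeasure

section hoeffding

variable {m : ℕ}

lemma hoeffCDF_eq_card_div (G : ℝ → ℝ) (x : ℝ) :
    hoeffCDF m G x = #{i ∈ Finset.Icc 1 m | muOS m i G ≤ x} / m := by
  rw [hoeffCDF, Finset.sum_boole, inv_mul_eq_div]

lemma le_hoeffCDF_iff {G : ℝ → ℝ} (hmono : MonotoneOn (fun j => muOS m j G) (Icc 1 m))
    {j : ℕ} (hj : j ∈ Icc 1 m) {t : ℝ} (ht : t ∈ Ioc (((j:ℝ) - 1) / m) (j / m)) (x : ℝ) :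
    t ≤ hoeffCDF m G x ↔ muOS m j G ≤ x := by
  have hm : (0:ℝ) < m := by exact_mod_cast hj.1.trans hj.2
  rw [hoeffCDF_eq_card_div]
  constructor
  · intro htx
    by_contra! hxj
    have hsub : {i ∈ Finset.Icc 1 m | muOS m i G ≤ x} ⊆ Finset.Ico 1 j := by
      intro i hi
      simp only [Finset.mem_filter, Finset.mem_Icc] at hi
      refine Finset.mem_Ico.2 ⟨hi.1.1, not_le.1 fun hji => ?_⟩
      exact (hxj.trans_le (hmono hj hi.1 hji)).not_ge hi.2
    have hcard : (#{i ∈ Finset.Icc 1 m | muOS m i G ≤ x} : ℝ) ≤ j - 1 := by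
      have := Finset.card_le_card hsub
      rw [Nat.card_Ico] at this
      have hj1 : ((j - 1 : ℕ) : ℝ) = j - 1 := by rw [Nat.cast_sub hj.1, Nat.cast_one]
      exact hj1 ▸ Nat.cast_le.2 this
    linarith [div_le_div_of_nonneg_right hcard hm.le, ht.1]
  · intro hjx
    have hsub : Finset.Icc 1 j ⊆ {i ∈ Finset.Icc 1 m | muOS m i G ≤ x} := fun i hi => by
      have hi := Finset.mem_Icc.1 hi
      exact Finset.mem_filter.2 ⟨Finset.mem_Icc.2 ⟨hi.1, hi.2.trans hj.2⟩,
        (hmono ⟨hi.1, hi.2.trans hj.2⟩ hj hi.2).trans hjx⟩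
    have hcard : (j:ℝ) ≤ #{i ∈ Finset.Icc 1 m | muOS m i G ≤ x} := by
      have := Finset.card_le_card hsub
      rw [Nat.card_Icc, Nat.add_sub_cancel] at this
      exact_mod_cast this
    exact ht.2.trans (div_le_div_of_nonneg_right hcard hm.le)

lemma quantile_hoeffCDF {G : ℝ → ℝ} (hmono : MonotoneOn (fun j => muOS m j G) (Icc 1 m))
    {j : ℕ} (hj : j ∈ Icc 1 m) {t : ℝ} (ht : t ∈ Ioc (((j:ℝ) - 1) / m) (j / m)) :
    quantile (hoeffCDF m G) t = muOS m j G := by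
  simp_rw [quantile, le_hoeffCDF_iff hmono hj ht]
  exact csInf_Ici

lemma setIntegral_Ioo_zero_one_of_eqOn_Ioc (hm : 0 < m) {f : ℝ → ℝ} {v : ℕ → ℝ}
    (hf : ∀ j ∈ Icc 1 m, EqOn f (fun _ => v j) (Ioc (((j:ℝ) - 1) / m) (j / m))) :
    ∫ t in Ioo (0:ℝ) 1, f t = (m:ℝ)⁻¹ * ∑ j ∈ Finset.Icc 1 m, v j := by
  have hm' : (0:ℝ) < m := by exact_mod_cast hm
  set a : ℕ → ℝ := fun k => k / m
  have hpiece : ∀ k < m, EqOn f (fun _ => v (k + 1)) (Ι (a k) (a (k + 1))) := fun k hk => by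
    rw [uIoc_of_le (by simp only [a]; gcongr; linarith)]
    have h := hf (k + 1) ⟨by omega, by omega⟩
    simpa only [a, Nat.cast_add_one, add_sub_cancel_right] using h
  have hends : (0:ℝ) = a 0 ∧ (1:ℝ) = a m := ⟨by simp [a], by simp [a, hm'.ne']⟩
  have hreindex : ∑ j ∈ Finset.Icc 1 m, v j = ∑ k ∈ Finset.range m, v (k + 1) := by
    rw [Finset.range_eq_Ico, Finset.sum_Ico_add' v 0 m 1, zero_add,
      Finset.Ico_add_one_right_eq_Icc]
  rw [integral_Ioc_eq_integral_Ioo.symm, ← intervalIntegral.integral_of_le zero_le_one,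
    hends.1, hends.2, ← intervalIntegral.sum_integral_adjacent_intervals fun k hk =>
      (intervalIntegrable_congr (hpiece k hk)).2 intervalIntegrable_const,
    hreindex, Finset.mul_sum]
  refine Finset.sum_congr rfl fun k hk => ?_
  rw [intervalIntegral.integral_congr_ae
      (ae_of_all _ fun x hx => hpiece k (Finset.mem_range.1 hk) hx),
    intervalIntegral.integral_const, smul_eq_mul]
  simp only [a]
  push_cast
  ring

lemma integral_abs_quantile_hoeffCDF_sub_rpow (hm : 0 < m) {G₁ G₂ : ℝ → ℝ}
    (h₁ : MonotoneOn (fun j => muOS m j G₁) (Icc 1 m))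
    (h₂ : MonotoneOn (fun j => muOS m j G₂) (Icc 1 m)) (p : ℝ) :
    ∫ t in Ioo (0:ℝ) 1, |quantile (hoeffCDF m G₁) t - quantile (hoeffCDF m G₂) t| ^ p
      = (m:ℝ)⁻¹ * ∑ j ∈ Finset.Icc 1 m, |muOS m j G₁ - muOS m j G₂| ^ p :=
  setIntegral_Ioo_zero_one_of_eqOn_Ioc hm fun j hj _ ht => by
    simp only [quantile_hoeffCDF h₁ hj ht, quantile_hoeffCDF h₂ hj ht]

end hoeffding

section betaDens

variable {m j : ℕ}

lemma continuous_betaDens (m j : ℕ) : Continuous (betaDens m j) := by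
  unfold betaDens
  fun_prop

lemma betaDens_nonneg {u : ℝ} (hu : u ∈ Icc (0:ℝ) 1) : 0 ≤ betaDens m j u := by
  have hu0 := hu.1
  have hu1 := sub_nonneg.2 hu.2
  unfold betaDens
  positivity

lemma betaDens_le {u : ℝ} (hu : u ∈ Icc (0:ℝ) 1) :
    betaDens m j u ≤ m * (m - 1).choose (j - 1) := by
  have h1 : u ^ (j - 1) ≤ 1 := pow_le_one₀ hu.1 hu.2
  have h2 : (1 - u) ^ (m - j) ≤ 1 := pow_le_one₀ (sub_nonneg.2 hu.2) (by linarith [hu.1])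
  have h3 : 0 ≤ (1 - u) ^ (m - j) := pow_nonneg (sub_nonneg.2 hu.2) _
  unfold betaDens
  calc (m : ℝ) * (m - 1).choose (j - 1) * u ^ (j - 1) * (1 - u) ^ (m - j)
      ≤ m * (m - 1).choose (j - 1) * 1 * 1 := by gcongr
    _ = m * (m - 1).choose (j - 1) := by ring

lemma MeasureTheory.IntegrableOn.mul_betaDens {f : ℝ → ℝ} (hf : IntegrableOn f (Ioo (0:ℝ) 1))
    (m j : ℕ) :
    IntegrableOn (fun u => f u * betaDens m j u) (Ioo (0:ℝ) 1) :=
  Integrable.mul_bdd hf (continuous_betaDens m j).aestronglyMeasurable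
    ((ae_restrict_iff' measurableSet_Ioo).2 <| ae_of_all _ fun _ hu => by
      rw [Real.norm_of_nonneg (betaDens_nonneg (Ioo_subset_Icc_self hu))]
      exact betaDens_le (Ioo_subset_Icc_self hu))

lemma hasDerivAt_choose_mul_pow_mul_pow (hj : 1 ≤ j) (hjm : j + 1 ≤ m) (u : ℝ) :
    HasDerivAt (fun u : ℝ => (m.choose j : ℝ) * (u ^ j * (1 - u) ^ (m - j)))
      (betaDens m j u - betaDens m (j + 1) u) u := by
  obtain ⟨k, rfl⟩ : ∃ k, j = k + 1 := ⟨j - 1, by omega⟩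
  obtain ⟨l, rfl⟩ : ∃ l, m = k + l + 2 := ⟨m - k - 2, by omega⟩
  have e₁ := Nat.add_one_mul_choose_eq (k + l + 1) k
  have e₂ := Nat.choose_mul_succ_eq (k + l + 1) (k + 1)
  rw [show k + l + 1 + 1 - (k + 1) = l + 1 by omega] at e₂
  have hsub : HasDerivAt (fun u : ℝ => 1 - u) (-1) u := by
    simpa using (hasDerivAt_id u).const_sub 1
  have h : HasDerivAt
      (fun u : ℝ => ((k + l + 2).choose (k + 1) : ℝ) * (u ^ (k + 1) * (1 - u) ^ (l + 1)))
      (((k + l + 2).choose (k + 1) : ℝ) *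
        ((k + 1) * u ^ k * (1 - u) ^ (l + 1) + u ^ (k + 1) * ((l + 1) * (1 - u) ^ l * -1))) u := by
    have := ((hasDerivAt_pow (k + 1) u).mul
      ((hasDerivAt_pow (l + 1) (1 - u)).comp u hsub)).const_mul ((k + l + 2).choose (k + 1) : ℝ)
    simpa [Function.comp_def] using this
  rw [show k + l + 2 - (k + 1) = l + 1 by omega]
  convert h using 1
  simp only [betaDens, show k + l + 2 - 1 = k + l + 1 by omega,
    show k + l + 2 - (k + 1) = l + 1 by omega, show k + l + 2 - (k + 1 + 1) = l by omega,
    Nat.add_sub_cancel]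
  have e₁' : ((k + l + 2 : ℕ) : ℝ) * (k + l + 1).choose k
      = (k + l + 2).choose (k + 1) * (k + 1) := by exact_mod_cast e₁
  have e₂' : ((k + l + 1).choose (k + 1) : ℝ) * (k + l + 2)
      = (k + l + 2).choose (k + 1) * (l + 1) := by exact_mod_cast e₂
  push_cast at e₁' e₂' ⊢
  linear_combination u ^ k * (1 - u) ^ (l + 1) * e₁' - u ^ (k + 1) * (1 - u) ^ l * e₂'

lemma integral_betaDens_succ_sub (hj : 1 ≤ j) (hjm : j + 1 ≤ m) :
    ∫ u in Ioo (0:ℝ) 1, (betaDens m (j + 1) u - betaDens m j u) = 0 := by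
  have hFTC := intervalIntegral.integral_eq_sub_of_hasDerivAt
    (fun u _ => hasDerivAt_choose_mul_pow_mul_pow hj hjm u)
    (((continuous_betaDens m j).sub (continuous_betaDens m (j + 1))).intervalIntegrable 0 1)
  rw [intervalIntegral.integral_of_le zero_le_one, integral_Ioc_eq_integral_Ioo] at hFTC
  rw [← neg_eq_zero, ← integral_neg]
  simp only [neg_sub]
  rw [hFTC, zero_pow (by omega), sub_self, zero_pow (by omega)]
  ring

lemma betaDens_succ_sub_betaDens (hj : 1 ≤ j) (hjm : j + 1 ≤ m) (u : ℝ) :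
    betaDens m (j + 1) u - betaDens m j u =
      m * u ^ (j - 1) * (1 - u) ^ (m - j - 1) *
        ((((m - 1).choose (j - 1) : ℝ) + (m - 1).choose j) * u - (m - 1).choose (j - 1)) := by
  obtain ⟨k, rfl⟩ : ∃ k, j = k + 1 := ⟨j - 1, by omega⟩
  obtain ⟨l, rfl⟩ : ∃ l, m = k + l + 2 := ⟨m - k - 2, by omega⟩
  simp only [betaDens, show k + l + 2 - 1 = k + l + 1 by omega,
    show k + l + 2 - (k + 1) = l + 1 by omega, show k + l + 2 - (k + 1 + 1) = l by omega,
    Nat.add_sub_cancel]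
  ring

lemma sub_mul_betaDens_succ_sub_betaDens_nonneg (hj : 1 ≤ j) (hjm : j + 1 ≤ m) {u : ℝ}
    (hu : u ∈ Icc (0:ℝ) 1) :
    0 ≤ (u - (m - 1).choose (j - 1) / ((m - 1).choose (j - 1) + (m - 1).choose j : ℝ)) *
      (betaDens m (j + 1) u - betaDens m j u) := by
  set a : ℝ := ((m - 1).choose (j - 1) : ℝ)
  set b : ℝ := ((m - 1).choose j : ℝ)
  have ha : 0 < a := Nat.cast_pos.2 (Nat.choose_pos (by omega))
  have hb : 0 < b := Nat.cast_pos.2 (Nat.choose_pos (by omega))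
  have hu0 := hu.1
  have hu1 := sub_nonneg.2 hu.2
  have hsq : (u - a / (a + b)) * (m * u ^ (j - 1) * (1 - u) ^ (m - j - 1) * ((a + b) * u - a))
      = m * u ^ (j - 1) * (1 - u) ^ (m - j - 1) * (a + b) * (u - a / (a + b)) ^ 2 := by
    field_simp
  rw [betaDens_succ_sub_betaDens hj hjm, hsq]
  positivity

lemma setIntegral_mul_nonneg_of_monotoneOn {s : Set ℝ} (hs : MeasurableSet s) {h D : ℝ → ℝ}
    {c : ℝ} (hc : c ∈ s) (hmono : MonotoneOn h s) (hhD : IntegrableOn (fun u => h u * D u) s)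
    (hD : IntegrableOn D s) (hD0 : ∫ u in s, D u = 0) (hsign : ∀ u ∈ s, 0 ≤ (u - c) * D u) :
    0 ≤ ∫ u in s, h u * D u := by
  have hcentered : ∫ u in s, h u * D u = ∫ u in s, (h u - h c) * D u := by
    simp_rw [sub_mul]
    rw [integral_sub hhD (hD.const_mul _), integral_const_mul, hD0, mul_zero, sub_zero]
  rw [hcentered]
  refine setIntegral_nonneg hs fun u hu => ?_
  have hsignu := hsign u hu
  rcases lt_trichotomy u c with huc | rfl | hcu
  · have hDu : D u ≤ 0 := by nlinarith
    exact mul_nonneg_of_nonpos_of_nonpos (sub_nonpos.2 (hmono hu hc huc.le)) hDu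
  · simp
  · have hDu : 0 ≤ D u := by nlinarith
    exact mul_nonneg (sub_nonneg.2 (hmono hc hu hcu.le)) hDu

lemma setIntegral_mul_betaDens_le_succ {h : ℝ → ℝ} (hmono : MonotoneOn h (Ioo (0:ℝ) 1))
    (hint : IntegrableOn h (Ioo (0:ℝ) 1)) (hj : 1 ≤ j) (hjm : j + 1 ≤ m) :
    ∫ u in Ioo (0:ℝ) 1, h u * betaDens m j u
      ≤ ∫ u in Ioo (0:ℝ) 1, h u * betaDens m (j + 1) u := by
  have ha : (0:ℝ) < (m - 1).choose (j - 1) := Nat.cast_pos.2 (Nat.choose_pos (by omega))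
  have hb : (0:ℝ) < (m - 1).choose j := Nat.cast_pos.2 (Nat.choose_pos (by omega))
  have hdiff : IntegrableOn (fun u => h u * betaDens m (j + 1) u - h u * betaDens m j u)
      (Ioo (0:ℝ) 1) := (hint.mul_betaDens m (j + 1)).sub (hint.mul_betaDens m j)
  have hhD : IntegrableOn (fun u => h u * (betaDens m (j + 1) u - betaDens m j u))
      (Ioo (0:ℝ) 1) := by
    simpa only [mul_sub] using hdiff
  have hnonneg := setIntegral_mul_nonneg_of_monotoneOn measurableSet_Ioo
    ⟨by positivity, (div_lt_one (by positivity)).2 (by linarith)⟩ hmono hhD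
    (((continuous_betaDens m (j + 1)).sub (continuous_betaDens m j)).integrableOn_Icc.mono_set
      Ioo_subset_Icc_self)
    (integral_betaDens_succ_sub hj hjm)
    fun u hu => sub_mul_betaDens_succ_sub_betaDens_nonneg hj hjm (Ioo_subset_Icc_self hu)
  simp_rw [mul_sub] at hnonneg
  rwa [integral_sub (hint.mul_betaDens m (j + 1)) (hint.mul_betaDens m j), sub_nonneg]
    at hnonneg

lemma monotoneOn_muOS {G : ℝ → ℝ} (hG : IsCDF G) (hmean : HasFiniteMean G) (m : ℕ) :
    MonotoneOn (fun j => muOS m j G) (Icc 1 m) :=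
  monotoneOn_of_le_succ ordConnected_Icc fun _ _ hj hj' =>
    setIntegral_mul_betaDens_le_succ hG.monotoneOn_quantile hmean hj.1 hj'.2

end betaDens

lemma IsCDF.tendsto_quantile {G : ℝ → ℝ} {Gs : ℕ → ℝ → ℝ} (hG : IsCDF G)
    (hGs : ∀ n, IsCDF (Gs n))
    (hconv : ∀ r : ℚ, Tendsto (fun n => Gs n r) atTop (𝓝 (G r)))
    {u : ℝ} (hu : u ∈ Ioo (0:ℝ) 1) (hcont : ContinuousAt (quantile G) u) :
    Tendsto (fun n => quantile (Gs n) u) atTop (𝓝 (quantile G u)) := by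
  refine tendsto_order.2 ⟨fun a ha => ?_, fun b hb => ?_⟩
  · obtain ⟨r, har, hrq⟩ := exists_rat_btwn ha
    filter_upwards [(hconv r).eventually_lt_const ((hG.lt_quantile_iff hu).1 hrq)] with n hn
    exact har.trans (((hGs n).lt_quantile_iff hu).2 hn)
  · -- `quantile G u ≤ r` only gives `u ≤ G r`; right-continuity at `u` supplies a strict bound
    obtain ⟨v, ⟨hvb, hv⟩, huv⟩ :=
      (((hcont.eventually (gt_mem_nhds hb)).and (Ioo_mem_nhds hu.1 hu.2)).filter_mono
        nhdsWithin_le_nhds |>.and (self_mem_nhdsWithin (s := Ioi u))).exists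
    obtain ⟨r, hvr, hrb⟩ := exists_rat_btwn hvb
    have hur : u < G r := lt_of_lt_of_le huv ((hG.quantile_le_iff hv).1 hvr.le)
    filter_upwards [(hconv r).eventually_const_lt hur] with n hn
    exact (((hGs n).quantile_le_iff hu).2 hn.le).trans_lt hrb

lemma tendsto_integral_abs_sub_of_tendsto_integral_abs {α : Type*} [MeasurableSpace α]
    {μ : Measure α} {f : ℕ → α → ℝ} {g : α → ℝ} (hf : ∀ n, Integrable (f n) μ)
    (hg : Integrable g μ) (hfg : ∀ᵐ a ∂μ, Tendsto (fun n => f n a) atTop (𝓝 (g a)))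
    (habs : Tendsto (fun n => ∫ a, |f n a| ∂μ) atTop (𝓝 (∫ a, |g a| ∂μ))) :
    Tendsto (fun n => ∫ a, |f n a - g a| ∂μ) atTop (𝓝 0) := by
  -- `|f n - g| - |f n| + |g|` lies in `[0, 2|g|]` and tends to `0`: dominated convergence
  set v : ℕ → α → ℝ := fun n a => |f n a - g a| - |f n a| + |g a|
  have hv_int : ∀ n, Integrable (v n) μ :=
    fun n => (((hf n).sub hg).abs.sub (hf n).abs).add hg.abs
  have hv : Tendsto (fun n => ∫ a, v n a ∂μ) atTop (𝓝 0) := by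
    rw [← integral_zero α ℝ]
    refine tendsto_integral_of_dominated_convergence (fun a => 2 * |g a|)
      (fun n => (hv_int n).aestronglyMeasurable) (hg.abs.const_mul 2)
      (fun n => ae_of_all _ fun a => ?_) ?_
    · rw [Real.norm_of_nonneg (by linarith [abs_sub_abs_le_abs_sub (f n a) (g a)])]
      linarith [abs_sub (f n a) (g a)]
    · filter_upwards [hfg] with a ha
      simpa [v] using (((ha.sub_const (g a)).abs).sub ha.abs).add_const |g a|
  have hsplit : ∀ n, ∫ a, |f n a - g a| ∂μ
      = (∫ a, v n a ∂μ) + (∫ a, |f n a| ∂μ) - ∫ a, |g a| ∂μ := fun n => by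
    have hsub : Integrable (fun a => |f n a - g a|) μ := ((hf n).sub hg).abs
    have hsub' : Integrable (fun a => |f n a - g a| - |f n a|) μ := hsub.sub (hf n).abs
    simp only [v]
    rw [integral_add hsub' hg.abs, integral_sub hsub (hf n).abs]
    ring
  simpa [hsplit] using (hv.add habs).sub_const (∫ a, |g a| ∂μ)

lemma tendsto_integral_abs_quantile_cdf_sub {μs : ℕ → Measure ℝ} {μ : Measure ℝ}
    [∀ n, IsProbabilityMeasure (μs n)] [IsProbabilityMeasure μ]
    (hμs : ∀ n, Integrable id (μs n)) (hμ : Integrable id μ)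
    (hcdf : ∀ r : ℚ, Tendsto (fun n => cdf (μs n) r) atTop (𝓝 (cdf μ r)))
    (habs : Tendsto (fun n => ∫ x, |x| ∂(μs n)) atTop (𝓝 (∫ x, |x| ∂μ))) :
    Tendsto (fun n => ∫ u in Ioo (0:ℝ) 1, |quantile (cdf (μs n)) u - quantile (cdf μ) u|)
      atTop (𝓝 0) := by
  refine tendsto_integral_abs_sub_of_tendsto_integral_abs
    (fun n => (hasFiniteMean_cdf_iff (μs n)).2 (hμs n)) ((hasFiniteMean_cdf_iff μ).2 hμ) ?_ ?_
  · filter_upwards [(isCDF_cdf μ).ae_continuousAt_quantile, ae_restrict_mem measurableSet_Ioo]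
      with u hcont hu
    exact (isCDF_cdf μ).tendsto_quantile (fun n => isCDF_cdf (μs n)) hcdf hu hcont
  · simpa only [setIntegral_comp_quantile_cdf _ continuous_abs] using habs

lemma abs_muOS_sub_le {G G' : ℝ → ℝ} (hG : HasFiniteMean G) (hG' : HasFiniteMean G')
    (m j : ℕ) :
    |muOS m j G - muOS m j G'|
      ≤ m * (m - 1).choose (j - 1) * ∫ u in Ioo (0:ℝ) 1, |quantile G u - quantile G' u| := by
  have hdiff : muOS m j G - muOS m j G'
      = ∫ u in Ioo (0:ℝ) 1, (quantile G u - quantile G' u) * betaDens m j u := by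
    rw [muOS, muOS, ← integral_sub (hG.mul_betaDens m j) (hG'.mul_betaDens m j)]
    simp only [sub_mul]
  rw [hdiff, ← integral_const_mul, ← Real.norm_eq_abs]
  refine norm_integral_le_of_norm_le ((hG.sub hG').abs.const_mul _)
    ((ae_restrict_iff' measurableSet_Ioo).2 (ae_of_all _ fun u hu => ?_))
  rw [norm_mul, Real.norm_eq_abs, mul_comm,
    Real.norm_of_nonneg (betaDens_nonneg (Ioo_subset_Icc_self hu))]
  exact mul_le_mul_of_nonneg_right (betaDens_le (Ioo_subset_Icc_self hu)) (abs_nonneg _)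

lemma tendsto_muOS {Gs : ℕ → ℝ → ℝ} {G : ℝ → ℝ} (hGs : ∀ n, HasFiniteMean (Gs n))
    (hG : HasFiniteMean G)
    (h : Tendsto (fun n => ∫ u in Ioo (0:ℝ) 1, |quantile (Gs n) u - quantile G u|) atTop (𝓝 0))
    (m j : ℕ) : Tendsto (fun n => muOS m j (Gs n)) atTop (𝓝 (muOS m j G)) := by
  rw [tendsto_iff_norm_sub_tendsto_zero]
  refine squeeze_zero (fun n => norm_nonneg _) (fun n => abs_muOS_sub_le (hGs n) hG m j) ?_
  simpa using h.const_mul ((m : ℝ) * (m - 1).choose (j - 1))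

lemma integral_abs_quantile_hoeffCDF_cdf_sub_rpow {μ ν : Measure ℝ} (hμ : Integrable id μ)
    (hν : Integrable id ν) [IsProbabilityMeasure μ] [IsProbabilityMeasure ν] {m : ℕ} (hm : 0 < m)
    (p : ℝ) :
    ∫ t in Ioo (0:ℝ) 1, |quantile (hoeffCDF m (cdf μ)) t - quantile (hoeffCDF m (cdf ν)) t| ^ p
      = (m:ℝ)⁻¹ * ∑ j ∈ Finset.Icc 1 m, |muOS m j (cdf μ) - muOS m j (cdf ν)| ^ p :=
  integral_abs_quantile_hoeffCDF_sub_rpow hm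
    (monotoneOn_muOS (isCDF_cdf μ) ((hasFiniteMean_cdf_iff μ).2 hμ) m)
    (monotoneOn_muOS (isCDF_cdf ν) ((hasFiniteMean_cdf_iff ν).2 hν) m) p

lemma tendsto_wasserstein_hoeffCDF_cdf {μs : ℕ → Measure ℝ} {μ : Measure ℝ}
    [∀ n, IsProbabilityMeasure (μs n)] [IsProbabilityMeasure μ]
    (hμs : ∀ n, Integrable id (μs n)) (hμ : Integrable id μ)
    (hcdf : ∀ r : ℚ, Tendsto (fun n => cdf (μs n) r) atTop (𝓝 (cdf μ r)))
    (habs : Tendsto (fun n => ∫ x, |x| ∂(μs n)) atTop (𝓝 (∫ x, |x| ∂μ)))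
    {m : ℕ} (hm : 0 < m) {p : ℝ} (hp : 0 < p) :
    Tendsto (fun n => (∫ t in Ioo (0:ℝ) 1,
        |quantile (hoeffCDF m (cdf (μs n))) t - quantile (hoeffCDF m (cdf μ)) t| ^ p) ^ (1 / p))
      atTop (𝓝 0) := by
  have hmean : ∀ n, HasFiniteMean (cdf (μs n)) := fun n => (hasFiniteMean_cdf_iff _).2 (hμs n)
  have hmean' : HasFiniteMean (cdf μ) := (hasFiniteMean_cdf_iff μ).2 hμ
  have hmu := tendsto_muOS hmean hmean' (tendsto_integral_abs_quantile_cdf_sub hμs hμ hcdf habs) m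
  simp_rw [integral_abs_quantile_hoeffCDF_cdf_sub_rpow (hμs _) hμ hm]
  have hsum : Tendsto (fun n => (m : ℝ)⁻¹ *
      ∑ j ∈ Finset.Icc 1 m, |muOS m j (cdf (μs n)) - muOS m j (cdf μ)| ^ p) atTop (𝓝 0) := by
    simpa [Real.zero_rpow hp.ne'] using (tendsto_finsetSum (Finset.Icc 1 m) fun j _ =>
      ((hmu j).sub_const (muOS m j (cdf μ))).abs.rpow_const (Or.inr hp.le)).const_mul (m : ℝ)⁻¹
  have hroot := hsum.rpow_const (Or.inr (one_div_pos.2 hp).le)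
  rwa [Real.zero_rpow (one_div_pos.2 hp).ne'] at hroot

lemma ae_tendsto_average_comp {Ω : Type*} [MeasurableSpace Ω] {μ : Measure Ω}
    {X : ℕ → Ω → ℝ} (hindep : iIndepFun X μ) (hident : ∀ i, IdentDistrib (X i) (X 0) μ μ)
    {g : ℝ → ℝ} (hg : Measurable g) (hint : Integrable g (μ.map (X 0))) :
    ∀ᵐ ω ∂μ, Tendsto (fun n : ℕ => (n : ℝ)⁻¹ * ∑ i ∈ Finset.range n, g (X i ω)) atTop
      (𝓝 (∫ x, g x ∂(μ.map (X 0)))) := by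
  have hX0 := (hident 0).aemeasurable_fst
  have hslln := strong_law_ae_real (fun i => g ∘ X i)
    ((integrable_map_measure hg.aestronglyMeasurable hX0).1 hint)
    (fun i j hij => (hindep.indepFun hij).comp hg hg) fun i => (hident i).comp hg
  filter_upwards [hslln] with ω hω
  rw [integral_map hX0 hg.aestronglyMeasurable]
  simpa only [div_eq_inv_mul, Function.comp_apply] using hω

lemma ae_tendsto_empCDF {Ω : Type*} [MeasurableSpace Ω] {μ : Measure Ω} [IsProbabilityMeasure μ]
    {X : ℕ → Ω → ℝ} (hindep : iIndepFun X μ) (hident : ∀ i, IdentDistrib (X i) (X 0) μ μ) :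
    ∀ᵐ ω ∂μ, ∀ r : ℚ, Tendsto (fun n => empCDF X n ω r) atTop (𝓝 (cdf (μ.map (X 0)) r)) := by
  have := Measure.isProbabilityMeasure_map (μ := μ) (hident 0).aemeasurable_fst
  refine ae_all_iff.2 fun r => ?_
  filter_upwards [ae_tendsto_average_comp hindep hident
    (measurable_const.indicator measurableSet_Iic)
    ((integrable_const (1:ℝ)).indicator (measurableSet_Iic (a := (r : ℝ))))] with ω hω
  rw [integral_indicator_const _ measurableSet_Iic, smul_eq_mul, mul_one, ← cdf_eq_real] at hω
  simpa only [empCDF, indicator_apply, mem_Iic] using hω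

/-- For fixed `m`: the identity
`W_p^p(𝔽_{n,m}, F_m) = (1/m) ∑_j |μ̂_{j:m} − μ_{j:m}(F)|^p` and the almost-sure
convergence `W_p(𝔽_{n,m}, F_m) → 0` as `n → ∞`. -/
theorem wasserstein_empHoeffCDF_fixed_m
    {Ω : Type*} [MeasureSpace Ω] [IsProbabilityMeasure (ℙ : Measure Ω)]
    (X : ℕ → Ω → ℝ) (hmeas : ∀ i, Measurable (X i))
    (hindep : ProbabilityTheory.iIndepFun X ℙ)
    (hident : ∀ i : ℕ, Measure.map (X i) ℙ = Measure.map (X 0) ℙ)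
    (hint : Integrable (X 0) ℙ)
    (F : ℝ → ℝ) (hF : ∀ t : ℝ, F t = (ℙ {ω | X 0 ω ≤ t}).toReal)
    (m : ℕ) (hm : 0 < m) (p : ℝ) (hp : 1 ≤ p) :
    (∀ ω : Ω, ∀ n : ℕ, 0 < n →
      (∫ t in Ioo (0:ℝ) 1,
          |quantile (hoeffCDF m (empCDF X n ω)) t - quantile (hoeffCDF m F) t| ^ p)
        = (m : ℝ)⁻¹ * ∑ j ∈ Finset.Icc 1 m, |muOS m j (empCDF X n ω) - muOS m j F| ^ p) ∧
    (∀ᵐ ω ∂(ℙ : Measure Ω),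
      Tendsto (fun n : ℕ =>
          (∫ t in Ioo (0:ℝ) 1,
            |quantile (hoeffCDF m (empCDF X n ω)) t - quantile (hoeffCDF m F) t| ^ p) ^ (1/p))
        atTop (nhds 0)) := by
  set μ₀ := (ℙ : Measure Ω).map (X 0)
  have : IsProbabilityMeasure μ₀ := Measure.isProbabilityMeasure_map (hmeas 0).aemeasurable
  have hμ₀ : Integrable id μ₀ :=
    (integrable_map_measure aestronglyMeasurable_id (hmeas 0).aemeasurable).2 hint
  obtain rfl : F = cdf μ₀ := funext fun t => by rw [hF, cdf_map_apply (hmeas 0)]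
  have hemp : ∀ n ω, 0 < n → empCDF X n ω = cdf (empMeasure n (X · ω)) :=
    fun n ω hn => (cdf_empMeasure hn).symm
  refine ⟨fun ω n hn => ?_, ?_⟩
  · have := isProbabilityMeasure_empMeasure (x := (X · ω)) hn
    rw [hemp n ω hn]
    exact integral_abs_quantile_hoeffCDF_cdf_sub_rpow (integrable_empMeasure hn id) hμ₀ hm p
  have hident' : ∀ i, IdentDistrib (X i) (X 0) ℙ ℙ :=
    fun i => ⟨(hmeas i).aemeasurable, (hmeas 0).aemeasurable, hident i⟩
  filter_upwards [ae_tendsto_empCDF hindep hident',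
    ae_tendsto_average_comp hindep hident' measurable_abs hμ₀.abs] with ω hcdf habs
  have := fun n : ℕ => isProbabilityMeasure_empMeasure (x := (X · ω)) n.succ_pos
  have hemp' : ∀ n : ℕ, empCDF X (n + 1) ω = cdf (empMeasure (n + 1) (X · ω)) :=
    fun n => hemp (n + 1) ω n.succ_pos
  rw [← tendsto_add_atTop_iff_nat 1]
  simp only [hemp']
  refine tendsto_wasserstein_hoeffCDF_cdf (μs := fun n => empMeasure (n + 1) (X · ω))
    (fun n => integrable_empMeasure n.succ_pos id) hμ₀ (fun r => ?_) ?_ hm (by linarith)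
  · simpa only [← hemp', Function.comp_def] using (hcdf r).comp (tendsto_add_atTop_nat 1)
  · simpa only [integral_empMeasure, Function.comp_def] using
      habs.comp (tendsto_add_atTop_nat 1)
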